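/- arXiv:2407.04562 — 6 statements merged into one kernel-verified Lean document; each statement's English description precedes it below -/
import Mathlib

section
/- Let t0 > 0, r ∈ (0,1), α ≥ 1 − r, and define γ(t) = α/t^r on [t0,∞), p(t) = exp(∫_{t0}^t γ(s) ds) and Γ(t) = p(t)·∫_t^∞ ds/p(s). Then Γ(t) = O(t^r) as t → ∞: there exist C > 0 and t1 > t0 such that Γ(t) ≤ C·t^r for all t ≥ t1. -/
open MeasureTheory Filter Set

/-- For `γ(t) = α/t^r` with `r ∈ (0,1)`, `α ≥ 1−r`, `p(t) = exp(∫_{t0}^t γ)` and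
`Γ(t) = p(t)·∫_t^∞ 1/p`, one has `Γ(t) = O(t^r)` as `t → ∞`: there exist `C > 0`
and `t1 > t0` with `Γ(t) ≤ C·t^r` for all `t ≥ t1`. -/
theorem stmt8 (t0 r α : ℝ) (ht0 : 0 < t0) (hr : r ∈ Set.Ioo (0:ℝ) 1) (hα : 1 - r ≤ α)
    (γ p Γ : ℝ → ℝ)
    (hγ : ∀ t, γ t = α / t ^ r)
    (hp : ∀ t, p t = Real.exp (∫ s in t0..t, γ s))
    (hΓ : ∀ t, Γ t = p t * ∫ s in Set.Ioi t, 1 / p s) :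
    ∃ C > 0, ∃ t1 > t0, ∀ t ≥ t1, Γ t ≤ C * t ^ r := by
  obtain ⟨hr0, hr1⟩ := hr
  have hα0 : 0 < α := lt_of_lt_of_le (by linarith) hα
  have hγf : γ = fun t => α / t ^ r := funext hγ
  subst hγf
  have hpf : p = fun t => Real.exp (∫ s in t0..t, α / s ^ r) := funext hp
  subst hpf
  set F : ℝ → ℝ := fun t => ∫ s in t0..t, α / s ^ r with hF
  -- continuity of the integrand on (0, ∞)
  have hγcont : ContinuousOn (fun s : ℝ => α / s ^ r) (Set.Ioi 0) := by
    intro s hs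
    have hs0 : (0:ℝ) < s := hs
    exact (ContinuousAt.div continuousAt_const
      (Real.continuousAt_rpow_const s r (Or.inl hs0.ne'))
      (Real.rpow_pos_of_pos hs0 r).ne').continuousWithinAt
  have hsub : ∀ a b : ℝ, 0 < a → 0 < b → Set.uIcc a b ⊆ Set.Ioi 0 := by
    intro a b ha hb x hx
    exact lt_of_lt_of_le (lt_min ha hb) hx.1
  have hIntγ : ∀ a b : ℝ, 0 < a → 0 < b →
      IntervalIntegrable (fun s : ℝ => α / s ^ r) volume a b := by
    intro a b ha hb
    exact (hγcont.mono (hsub a b ha hb)).intervalIntegrable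
  have hFderiv : ∀ t : ℝ, 0 < t → HasDerivAt F (α / t ^ r) t := by
    intro t ht
    exact intervalIntegral.integral_hasDerivAt_right (hIntγ t0 t ht0 ht)
      (hγcont.stronglyMeasurableAtFilter isOpen_Ioi t ht)
      (hγcont.continuousAt (isOpen_Ioi.mem_nhds ht))
  have hFc : ∀ s : ℝ, 0 < s → ContinuousAt F s := fun s hs => (hFderiv s hs).continuousAt
  set u : ℝ → ℝ := fun s => -(s ^ r) / (α * Real.exp (F s)) with hu
  set g : ℝ → ℝ := fun s => (α - r * s ^ (r - 1)) / (α * Real.exp (F s)) with hg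
  have hden : ∀ s : ℝ, α * Real.exp (F s) ≠ 0 :=
    fun s => (mul_pos hα0 (Real.exp_pos _)).ne'
  have huderiv : ∀ s : ℝ, 0 < s → HasDerivAt u (g s) s := by
    intro s hs
    have h1 : HasDerivAt (fun x : ℝ => -(x ^ r)) (-(r * s ^ (r - 1))) s :=
      (Real.hasDerivAt_rpow_const (Or.inl hs.ne')).neg
    have h2 : HasDerivAt (fun x : ℝ => α * Real.exp (F x))
        (α * (Real.exp (F s) * (α / s ^ r))) s := ((hFderiv s hs).exp).const_mul α
    have h3 := h1.div h2 (hden s)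
    refine (h3 : HasDerivAt u _ s).congr_deriv ?_
    have hsr : s ^ r ≠ 0 := (Real.rpow_pos_of_pos hs r).ne'
    have he : Real.exp (F s) ≠ 0 := (Real.exp_pos _).ne'
    rw [hg]
    field_simp
    ring
  have hgc : ∀ s : ℝ, 0 < s → ContinuousAt g s := by
    intro s hs
    exact ContinuousAt.div
      (continuousAt_const.sub (continuousAt_const.mul
        (Real.continuousAt_rpow_const s (r - 1) (Or.inl hs.ne'))))
      (continuousAt_const.mul (Real.continuous_exp.continuousAt.comp (hFc s hs)))
      (hden s)
  have hec : ∀ s : ℝ, 0 < s → ContinuousAt (fun x => (Real.exp (F x))⁻¹) s := by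
    intro s hs
    exact ContinuousAt.inv₀ (Real.continuous_exp.continuousAt.comp (hFc s hs))
      (Real.exp_pos _).ne'
  -- choose t1
  have hev1 : ∀ᶠ t in atTop, 2 * r / α ≤ t ^ (1 - r) :=
    (tendsto_rpow_atTop (by linarith : (0:ℝ) < 1 - r)).eventually_ge_atTop _
  obtain ⟨a, ha⟩ := eventually_atTop.mp hev1
  refine ⟨2 / α, by positivity, max a (t0 + 1),
    lt_of_lt_of_le (by linarith) (le_max_right _ _), fun t ht => ?_⟩
  have hta : a ≤ t := le_trans (le_max_left _ _) ht
  have htt0 : t0 + 1 ≤ t := le_trans (le_max_right _ _) ht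
  have ht0t : 0 < t := by linarith
  have hkey : r * t ^ (r - 1) ≤ α / 2 := by
    have h1 : 2 * r / α ≤ t ^ (1 - r) := ha t hta
    have hpos : (0:ℝ) < 2 * r / α := by positivity
    have h2 : (t ^ (1 - r))⁻¹ ≤ (2 * r / α)⁻¹ := inv_anti₀ hpos h1
    have h3 : t ^ (r - 1) = (t ^ (1 - r))⁻¹ := by
      rw [show r - 1 = -(1 - r) by ring, Real.rpow_neg ht0t.le]
    rw [h3]
    have h4 : (2 * r / α)⁻¹ = α / (2 * r) := by
      rw [inv_div]
    calc r * (t ^ (1 - r))⁻¹ ≤ r * (α / (2 * r)) := by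
          rw [← h4]; exact mul_le_mul_of_nonneg_left h2 hr0.le
      _ = α / 2 := by field_simp
  -- main interval bound
  have hmain : ∀ T : ℝ, t ≤ T →
      ∫ s in t..T, (Real.exp (F s))⁻¹ ≤ 2 * t ^ r / (α * Real.exp (F t)) := by
    intro T htT
    have hT0 : 0 < T := lt_of_lt_of_le ht0t htT
    have hsubIcc : Set.Icc t T ⊆ Set.Ioi 0 := fun x hx => lt_of_lt_of_le ht0t hx.1
    have hsubu : Set.uIcc t T ⊆ Set.Ioi 0 := hsub t T ht0t hT0
    have hgInt : IntervalIntegrable g volume t T :=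
      (ContinuousOn.intervalIntegrable (fun x hx => ((hgc x (hsubu hx)).continuousWithinAt)))
    have heInt : IntervalIntegrable (fun s => (Real.exp (F s))⁻¹) volume t T :=
      (ContinuousOn.intervalIntegrable (fun x hx => ((hec x (hsubu hx)).continuousWithinAt)))
    have heq : ∫ s in t..T, g s = u T - u t :=
      intervalIntegral.integral_eq_sub_of_hasDerivAt
        (fun x hx => huderiv x (hsubu hx)) hgInt
    have hpt : ∀ s ∈ Set.Icc t T, 2⁻¹ * (Real.exp (F s))⁻¹ ≤ g s := by
      intro s hs
      have hs0 : 0 < s := lt_of_lt_of_le ht0t hs.1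
      have h5 : s ^ (r - 1) ≤ t ^ (r - 1) :=
        Real.rpow_le_rpow_of_nonpos ht0t hs.1 (by linarith)
      have h6 : r * s ^ (r - 1) ≤ α / 2 :=
        le_trans (mul_le_mul_of_nonneg_left h5 hr0.le) hkey
      have h7 : α / 2 ≤ α - r * s ^ (r - 1) := by linarith
      have h8 : (α / 2) / (α * Real.exp (F s)) ≤
          (α - r * s ^ (r - 1)) / (α * Real.exp (F s)) := by
        gcongr
      refine le_trans (le_of_eq ?_) h8
      have he : Real.exp (F s) ≠ 0 := (Real.exp_pos _).ne'
      field_simp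
    have hcomp : ∫ s in t..T, 2⁻¹ * (Real.exp (F s))⁻¹ ≤ ∫ s in t..T, g s :=
      intervalIntegral.integral_mono_on htT (heInt.const_mul _) hgInt hpt
    rw [intervalIntegral.integral_const_mul, heq] at hcomp
    have huT : u T ≤ 0 := by
      rw [hu]
      apply div_nonpos_of_nonpos_of_nonneg
      · simp [Real.rpow_nonneg hT0.le]
      · positivity
    have hut : -u t = t ^ r / (α * Real.exp (F t)) := by
      rw [hu]; ring
    have : 2⁻¹ * ∫ s in t..T, (Real.exp (F s))⁻¹ ≤ t ^ r / (α * Real.exp (F t)) := by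
      rw [← hut]; linarith
    calc ∫ s in t..T, (Real.exp (F s))⁻¹
        = 2 * (2⁻¹ * ∫ s in t..T, (Real.exp (F s))⁻¹) := by ring
      _ ≤ 2 * (t ^ r / (α * Real.exp (F t))) := by linarith
      _ = 2 * t ^ r / (α * Real.exp (F t)) := by ring
  -- conclude
  rw [hΓ t]
  simp only [one_div]
  by_cases hInt : IntegrableOn (fun s => (Real.exp (F s))⁻¹) (Set.Ioi t) volume
  · have htend := intervalIntegral_tendsto_integral_Ioi t hInt tendsto_id
    have hI : (∫ s in Set.Ioi t, (Real.exp (F s))⁻¹) ≤ 2 * t ^ r / (α * Real.exp (F t)) := by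
      refine le_of_tendsto htend ?_
      filter_upwards [eventually_ge_atTop t] with T hT
      exact hmain T hT
    calc Real.exp (F t) * ∫ s in Set.Ioi t, (Real.exp (F s))⁻¹
        ≤ Real.exp (F t) * (2 * t ^ r / (α * Real.exp (F t))) :=
          mul_le_mul_of_nonneg_left hI (Real.exp_pos _).le
      _ = 2 / α * t ^ r := by
          have he : Real.exp (F t) ≠ 0 := (Real.exp_pos _).ne'
          field_simp
  · rw [integral_undef hInt, mul_zero]
    positivity
end

section
/- Let t0 > 0, r ∈ (0,1), α ≥ 1 − r, and define γ(t) = α/t^r on [t0,∞), p(t) = exp(∫_{t0}^t γ(s) ds) and Γ(t) = p(t)·∫_t^∞ ds/p(s). Then hypothesis (H30) holds: there exist t2 ≥ t0 and m < 3/2 such that γ(t)·Γ(t) ≤ m for every t ≥ t2. -/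
open MeasureTheory
open Real Set Filter Topology

/-- For `γ(t) = α/t^r` with `r ∈ (0,1)`, `α ≥ 1−r`, `p(t) = exp(∫_{t0}^t γ)` and
`Γ(t) = p(t)·∫_t^∞ 1/p`, hypothesis (H30) holds: there exist `t2 ≥ t0` and `m < 3/2`
such that `γ(t)·Γ(t) ≤ m` for every `t ≥ t2`. -/
theorem stmt9 (t0 r α : ℝ) (ht0 : 0 < t0) (hr : r ∈ Set.Ioo (0:ℝ) 1) (hα : 1 - r ≤ α)
    (γ p Γ : ℝ → ℝ)
    (hγ : ∀ t, γ t = α / t ^ r)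
    (hp : ∀ t, p t = Real.exp (∫ s in t0..t, γ s))
    (hΓ : ∀ t, Γ t = p t * ∫ s in Set.Ioi t, 1 / p s) :
    ∃ t2 ≥ t0, ∃ m < (3:ℝ)/2, ∀ t ≥ t2, γ t * Γ t ≤ m := by
  obtain ⟨hr0, hr1⟩ := hr
  set b : ℝ := 1 - r with hb
  have hb0 : 0 < b := by simp only [hb]; linarith
  have hb1 : b < 1 := by simp only [hb]; linarith
  have hα0 : 0 < α := by linarith
  set c : ℝ := α / b with hc
  have hc0 : 0 < c := div_pos hα0 hb0
  have hcb : c * b = α := div_mul_cancel₀ α hb0.ne'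
  have h1b : 0 < 1 - b := by simp only [hb]; linarith
  set K : ℝ := 4 * (1 - b) / (c * b) with hK
  have hK0 : 0 < K := div_pos (by linarith) (by positivity)
  set T : ℝ := max t0 (max 1 (K ^ b⁻¹)) with hT
  have hT1 : (1:ℝ) ≤ T := le_trans (le_max_left 1 _) (le_max_right _ _)
  have hTK : K ^ b⁻¹ ≤ T := le_trans (le_max_right 1 _) (le_max_right _ _)
  -- p formula
  have hpf : ∀ u, t0 ≤ u → p u = Real.exp (c * u ^ b - c * t0 ^ b) := by
    intro u hu
    rw [hp]
    congr 1
    have hcongr : ∀ s ∈ Set.uIcc t0 u, γ s = α * s ^ (-r) := by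
      intro s hs
      rw [Set.uIcc_of_le hu] at hs
      have hs0 : 0 < s := lt_of_lt_of_le ht0 hs.1
      rw [hγ, Real.rpow_neg hs0.le, div_eq_mul_inv]
    rw [intervalIntegral.integral_congr hcongr, intervalIntegral.integral_const_mul,
      integral_rpow (Or.inl (by linarith : (-1:ℝ) < -r))]
    have hbr : -r + 1 = b := by simp only [hb]; ring
    rw [hbr, hc]
    field_simp
  -- abbreviations
  set e : ℝ → ℝ := fun s => Real.exp (-(c * s ^ b)) with he
  set g : ℝ → ℝ := fun s => e s - (1-b)/(c*b) * s ^ (-b) * e s with hg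
  set F : ℝ → ℝ := fun s => s ^ (1-b) * Real.exp (-(c * s ^ b)) / (c * b) with hF
  -- derivative
  have hderiv : ∀ s : ℝ, 0 < s → HasDerivAt (fun x : ℝ => -F x) (g s) s := by
    intro s hs
    have h1 : HasDerivAt (fun x : ℝ => x ^ (1-b)) ((1-b) * s ^ (1-b-1)) s :=
      Real.hasDerivAt_rpow_const (Or.inl hs.ne')
    have hb' : HasDerivAt (fun x : ℝ => x ^ b) (b * s ^ (b-1)) s :=
      Real.hasDerivAt_rpow_const (Or.inl hs.ne')
    have h2 : HasDerivAt (fun x : ℝ => Real.exp (-(c * x ^ b)))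
        (Real.exp (-(c * s ^ b)) * (-(c * (b * s ^ (b-1))))) s :=
      ((hb'.const_mul c).neg).exp
    have h3 := ((h1.mul h2).div_const (c*b)).neg
    convert h3 using 1
    case e'_4 => rfl
    case e'_5 => rfl
    case e'_8 => rfl
    have e1 : s ^ (1-b-1) = s ^ (-b) := by rw [show (1-b-1 : ℝ) = -b by ring]
    have e2 : s ^ (1-b) * s ^ (b-1) = 1 := by
      rw [← Real.rpow_add hs]; norm_num
    rw [e1]
    simp only [hg, he]
    set E := Real.exp (-(c * s ^ b))
    set A := s ^ (-b)
    set P := s ^ (1-b)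
    set Q := s ^ (b-1)
    field_simp
    linear_combination (-(E * c * b)) * e2
  -- tendsto
  have htend : Tendsto (fun s : ℝ => -F s) atTop (𝓝 0) := by
    have h := (tendsto_rpow_mul_exp_neg_mul_atTop_nhds_zero ((1-b)/b) c hc0).comp
      (tendsto_rpow_atTop hb0)
    have h2 : Tendsto (fun s : ℝ => s ^ (1-b) * Real.exp (-(c * s ^ b))) atTop (𝓝 0) := by
      apply h.congr'
      filter_upwards [eventually_gt_atTop 0] with s hs
      simp only [Function.comp]
      rw [← Real.rpow_mul hs.le, mul_div_cancel₀ _ hb0.ne', neg_mul]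
    have := (h2.div_const (c*b)).neg
    simpa [hF] using this
  -- smallness bound
  have hbound : ∀ s : ℝ, T ≤ s → (1-b)/(c*b) * s ^ (-b) ≤ 1/4 := by
    intro s hs
    have hs0 : (0:ℝ) < s := lt_of_lt_of_le one_pos (le_trans hT1 hs)
    have hsb : K ≤ s ^ b := by
      calc K = (K ^ b⁻¹) ^ b := (Real.rpow_inv_rpow hK0.le hb0.ne').symm
        _ ≤ s ^ b := Real.rpow_le_rpow (Real.rpow_nonneg hK0.le _) (le_trans hTK hs) hb0.le
    have hsbpos : 0 < s ^ b := Real.rpow_pos_of_pos hs0 b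
    rw [Real.rpow_neg hs0.le]
    have hinv : (s ^ b)⁻¹ ≤ K⁻¹ := inv_anti₀ hK0 hsb
    calc (1-b)/(c*b) * (s ^ b)⁻¹ ≤ (1-b)/(c*b) * K⁻¹ := by
          apply mul_le_mul_of_nonneg_left hinv
          positivity
      _ = 1/4 := by
          rw [hK]
          have hcbne : c * b ≠ 0 := by positivity
          field_simp
  refine ⟨T, le_max_left _ _, 4/3, by norm_num, fun t ht => ?_⟩
  have htpos : (0:ℝ) < t := lt_of_lt_of_le one_pos (le_trans hT1 ht)
  have htt0 : t0 ≤ t := le_trans (le_max_left _ _) ht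
  have hderiv' : ∀ x ∈ Ici t, HasDerivAt (fun x => -F x) (g x) x := fun x hx =>
    hderiv x (lt_of_lt_of_le htpos hx)
  have hgpos : ∀ x ∈ Ioi t, 0 ≤ g x := by
    intro x hx
    have h4 := hbound x (le_trans ht hx.le)
    have hepos : 0 < e x := Real.exp_pos _
    have hmul : (1-b)/(c*b) * x ^ (-b) * e x ≤ (1/4) * e x :=
      mul_le_mul_of_nonneg_right h4 hepos.le
    simp only [hg]
    nlinarith
  have hint_g : IntegrableOn g (Ioi t) :=
    integrableOn_Ioi_deriv_of_nonneg' hderiv' hgpos htend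
  have hIg : ∫ s in Ioi t, g s = F t := by
    have h := integral_Ioi_of_hasDerivAt_of_nonneg' hderiv' hgpos htend
    simpa using h
  have hle : ∀ x ∈ Ioi t, e x ≤ 4/3 * g x := by
    intro x hx
    have hx0 : (0:ℝ) < x := lt_trans htpos hx
    have h4 := hbound x (le_trans ht hx.le)
    have hepos : 0 < e x := Real.exp_pos _
    have hmul : (1-b)/(c*b) * x ^ (-b) * e x ≤ (1/4) * e x :=
      mul_le_mul_of_nonneg_right h4 hepos.le
    simp only [hg]
    nlinarith
  have hecont : Continuous e := by
    simp only [he]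
    exact Real.continuous_exp.comp
      ((continuous_const.mul (continuous_id.rpow_const (fun x => Or.inr hb0.le))).neg)
  have hint_e : IntegrableOn e (Ioi t) := by
    apply Integrable.mono' (hint_g.const_mul (4/3)) hecont.aestronglyMeasurable
    rw [ae_restrict_iff' measurableSet_Ioi]
    filter_upwards with x hx
    rw [Real.norm_eq_abs, abs_of_pos (Real.exp_pos _)]
    exact hle x hx
  have hJ : ∫ s in Ioi t, e s ≤ 4/3 * F t := by
    calc ∫ s in Ioi t, e s ≤ ∫ s in Ioi t, 4/3 * g s :=
          setIntegral_mono_on hint_e (hint_g.const_mul _) measurableSet_Ioi hle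
      _ = 4/3 * ∫ s in Ioi t, g s := integral_const_mul _ _
      _ = 4/3 * F t := by rw [hIg]
  have hJ0 : 0 ≤ ∫ s in Ioi t, e s := by
    apply setIntegral_nonneg measurableSet_Ioi
    intro x _
    exact (Real.exp_pos _).le
  -- Γ formula
  have hΓt : Γ t = Real.exp (c * t ^ b - c * t0 ^ b) *
      (Real.exp (c * t0 ^ b) * ∫ s in Ioi t, e s) := by
    rw [hΓ, hpf t htt0]
    congr 1
    rw [← integral_const_mul]
    apply setIntegral_congr_fun measurableSet_Ioi
    intro s hs
    have hst0 : t0 ≤ s := le_trans htt0 (le_of_lt hs)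
    show 1 / p s = Real.exp (c * t0 ^ b) * e s
    rw [hpf s hst0, one_div, ← Real.exp_neg, ← Real.exp_add]
    congr 1
    ring
  set J : ℝ := ∫ s in Ioi t, e s with hJdef
  have hcoeff : γ t * Γ t = (α / t ^ r * Real.exp (c * t ^ b)) * J := by
    rw [hγ, hΓt]
    have hexp : Real.exp (c*t^b - c*t0^b) * Real.exp (c*t0^b) = Real.exp (c*t^b) := by
      rw [← Real.exp_add]; ring_nf
    linear_combination (α / t ^ r * J) * hexp
  have hcoeff0 : 0 ≤ α / t ^ r * Real.exp (c * t ^ b) := by positivity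
  rw [hcoeff]
  calc (α / t ^ r * Real.exp (c * t ^ b)) * J
      ≤ (α / t ^ r * Real.exp (c * t ^ b)) * (4/3 * F t) :=
        mul_le_mul_of_nonneg_left hJ hcoeff0
    _ = 4/3 := by
        simp only [hF]
        rw [show (1-b:ℝ) = r by rw [hb]; ring, hcb, Real.exp_neg]
        have htr : (0:ℝ) < t ^ r := Real.rpow_pos_of_pos htpos r
        have hexppos : (0:ℝ) < Real.exp (c * t ^ b) := Real.exp_pos _
        field_simp
end

section
/- Let t0 > 0, let β > 0 be a constant, and let γ : [t0,∞) → [0,∞) be a differentiable, decreasing function with lim_{t→∞} γ(t) = 0 and lim_{t→∞} γ'(t) = 0, satisfying (H1) (∫_{t0}^∞ ds/p(s) < ∞ with p(t) = exp(∫_{t0}^t γ(s) ds)), and satisfying (H30): there exist t2 ≥ t0 and m < 3/2 such that γ(t)·Γ(t) ≤ m for all t ≥ t2, where Γ(t) = p(t)·∫_t^∞ ds/p(s). Let b be a constant with 2(m−1) < b < 1, and define a(t) = Γ(t)(Γ(t) − βb)/(1 − βγ(t)), b(t) ≡ b, c(t) = Γ(t), d(t) ≡ b(1−b). Then there exists t̂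 > t0 such that for every t ≥ t̂ one has 1 − βγ(t) > 0 and the six relations of the system (S_{a,b,c,d}) hold (with β(t) ≡ β): (1) a'(t) − b(t)c(t) ≤ 0; (2) −a(t)β(t) ≤ 0; (3) −a(t)γ(t)β(t) + a(t)β'(t) + a(t) − c(t)² + b(t)c(t)β(t) = 0; (4) b'(t)b(t) + d'(t)/2 ≤ 0; (5) b'(t)c(t) + b(t)(b(t) + c'(t) − c(t)γ(t)) + d(t) = 0; (6) c(t)(b(t) + c'(t) − c(t)γ(t)) ≤ 0. -/
open MeasureTheory Filter Topology

set_option maxHeartbeats 2000000 in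
/-- (Corollary: decreasing, vanishing `γ` with vanishing `γ'`, constant geometric damping
`β > 0`.) Under (H1) and (H30), for any constant `2(m−1) < b < 1`, the choice
`a(t) = Γ(t)(Γ(t) − βb)/(1 − βγ(t))`, `b(t) ≡ b`, `c(t) = Γ(t)`, `d(t) ≡ b(1−b)`
satisfies the six relations of the system (S_{a,b,c,d}) (with `β(t) ≡ β`, so `β' = 0`,
`b' = 0`, `d' = 0`) for all `t` beyond some `that > t0`, where moreover `1 − βγ(t) > 0`. -/
theorem stmt12 (t0 β : ℝ) (ht0 : 0 < t0) (hβ : 0 < β)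
    (γ γ' : ℝ → ℝ)
    (hγ_deriv : ∀ t ≥ t0, HasDerivWithinAt γ (γ' t) (Set.Ici t0) t)
    (hγ_nonneg : ∀ t ≥ t0, 0 ≤ γ t)
    (hγ_anti : AntitoneOn γ (Set.Ici t0))
    (hγ_lim : Tendsto γ atTop (nhds 0))
    (hγ'_lim : Tendsto γ' atTop (nhds 0))
    (p Γ : ℝ → ℝ)
    (hp : ∀ t, p t = Real.exp (∫ s in t0..t, γ s))
    (hH1 : IntegrableOn (fun s => 1 / p s) (Set.Ici t0))
    (hΓ : ∀ t, Γ t = p t * ∫ s in Set.Ioi t, 1 / p s)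
    (t2 m : ℝ) (ht2 : t0 ≤ t2) (hm : m < 3/2)
    (hH30 : ∀ t ≥ t2, γ t * Γ t ≤ m)
    (b : ℝ) (hb1 : 2 * (m - 1) < b) (hb2 : b < 1)
    (a c : ℝ → ℝ)
    (ha : ∀ t, a t = Γ t * (Γ t - β * b) / (1 - β * γ t))
    (hc : ∀ t, c t = Γ t) :
    ∃ that > t0, ∃ a' c' : ℝ → ℝ,
      (∀ t ≥ that, HasDerivWithinAt a (a' t) (Set.Ici t0) t ∧
                HasDerivWithinAt c (c' t) (Set.Ici t0) t) ∧
      ∀ t ≥ that,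
        0 < 1 - β * γ t ∧
        a' t - b * c t ≤ 0 ∧
        -(a t) * β ≤ 0 ∧
        -(a t) * γ t * β + a t * 0 + a t - (c t) ^ 2 + b * c t * β = 0 ∧
        (0:ℝ) * b + 0 / 2 ≤ 0 ∧
        0 * c t + b * (b + c' t - c t * γ t) + b * (1 - b) = 0 ∧
        c t * (b + c' t - c t * γ t) ≤ 0 := by
  have hp_pos : ∀ t, 0 < p t := fun t => by rw [hp]; exact Real.exp_pos _
  have hγ_contOn : ContinuousOn γ (Set.Ici t0) :=
    fun t ht => (hγ_deriv t ht).continuousWithinAt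
  have hγ_at : ∀ t, t0 < t → HasDerivAt γ (γ' t) t := fun t ht =>
    (hγ_deriv t ht.le).hasDerivAt (Ici_mem_nhds ht)
  have hγ_ii : ∀ s t, t0 ≤ s → t0 ≤ t → IntervalIntegrable γ volume s t := by
    intro s t hs ht
    apply (hγ_contOn.mono ?_).intervalIntegrable
    intro x hx
    rcases le_total s t with h | h
    · rw [Set.uIcc_of_le h] at hx; exact le_trans hs hx.1
    · rw [Set.uIcc_of_ge h] at hx; exact le_trans ht hx.1
  have hγ_measAt : ∀ t, t0 < t → StronglyMeasurableAtFilter γ (𝓝 t) volume := fun t ht =>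
    ContinuousOn.stronglyMeasurableAtFilter isOpen_Ioi
      (hγ_contOn.mono Set.Ioi_subset_Ici_self) t ht
  have hF_deriv : ∀ t, t0 < t →
      HasDerivAt (fun u => ∫ s in t0..u, γ s) (γ t) t := fun t ht =>
    intervalIntegral.integral_hasDerivAt_right (hγ_ii t0 t le_rfl ht.le) (hγ_measAt t ht)
      (hγ_at t ht).continuousAt
  have hp_fun : p = fun u => Real.exp (∫ s in t0..u, γ s) := funext hp
  have hp_deriv : ∀ t, t0 < t → HasDerivAt p (γ t * p t) t := by
    intro t ht
    have h := (hF_deriv t ht).exp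
    have h2 : HasDerivAt p (Real.exp (∫ s in t0..t, γ s) * γ t) t :=
      h.congr_of_eventuallyEq (Filter.Eventually.of_forall hp)
    convert h2 using 1
    rw [hp t]; ring
  have hp_contAt : ∀ t, t0 < t → ContinuousAt p t := fun t ht =>
    (hp_deriv t ht).continuousAt
  have hip_contAt : ∀ t, t0 < t → ContinuousAt (fun s => 1 / p s) t := fun t ht =>
    continuousAt_const.div (hp_contAt t ht) (hp_pos t).ne'
  have hip_measAt : ∀ t, t0 < t → StronglyMeasurableAtFilter (fun s => 1 / p s) (𝓝 t) volume := by
    intro t ht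
    exact ContinuousAt.stronglyMeasurableAtFilter isOpen_Ioi
      (fun x hx => hip_contAt x hx) t ht
  have hip_ii : ∀ t, t0 ≤ t → IntervalIntegrable (fun s => 1 / p s) volume t0 t := by
    intro t ht
    apply MeasureTheory.IntegrableOn.intervalIntegrable
    apply hH1.mono_set
    rw [Set.uIcc_of_le ht]
    exact Set.Icc_subset_Ici_self
  -- the tail integral G
  have hG_split : ∀ t, t0 ≤ t → (∫ s in Set.Ioi t, 1 / p s) =
      (∫ s in Set.Ioi t0, 1 / p s) - ∫ s in t0..t, 1 / p s := by
    intro t ht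
    have h1 : IntegrableOn (fun s => 1 / p s) (Set.Ioc t0 t) :=
      hH1.mono_set (fun x hx => le_of_lt hx.1)
    have h2 : IntegrableOn (fun s => 1 / p s) (Set.Ioi t) :=
      hH1.mono_set (fun x hx => le_trans ht (le_of_lt hx))
    have hd : Disjoint (Set.Ioc t0 t) (Set.Ioi t) :=
      Set.disjoint_left.2 fun x hx hx' => absurd hx.2 (not_le.2 hx')
    have hu := MeasureTheory.setIntegral_union hd measurableSet_Ioi h1 h2
    rw [Set.Ioc_union_Ioi_eq_Ioi ht] at hu
    rw [intervalIntegral.integral_of_le ht]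
    linarith [hu]
  have hG_deriv : ∀ t, t0 < t →
      HasDerivAt (fun u => ∫ s in Set.Ioi u, 1 / p s) (-(1 / p t)) t := by
    intro t ht
    have hd2 : HasDerivAt
        (fun u => (∫ s in Set.Ioi t0, 1 / p s) - ∫ s in t0..u, 1 / p s) (-(1 / p t)) t :=
      (intervalIntegral.integral_hasDerivAt_right (hip_ii t ht.le) (hip_measAt t ht)
        (hip_contAt t ht)).const_sub _
    apply hd2.congr_of_eventuallyEq
    filter_upwards [Ioi_mem_nhds ht] with u hu
    exact hG_split u (le_of_lt hu)
  have hΓ_fun : Γ = fun u => p u * ∫ s in Set.Ioi u, 1 / p s := funext hΓ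
  have hΓ_deriv : ∀ t, t0 < t → HasDerivAt Γ (γ t * Γ t - 1) t := by
    intro t ht
    have h := (hp_deriv t ht).mul (hG_deriv t ht)
    have h2 : HasDerivAt Γ
        (γ t * p t * (∫ s in Set.Ioi t, 1 / p s) + p t * -(1 / p t)) t :=
      h.congr_of_eventuallyEq (Filter.Eventually.of_forall hΓ)
    convert h2 using 1
    rw [hΓ t]
    have hpt := (hp_pos t).ne'
    field_simp
    ring
  have hG_nonneg : ∀ t, 0 ≤ ∫ s in Set.Ioi t, 1 / p s := fun t =>
    setIntegral_nonneg measurableSet_Ioi fun s _ => div_nonneg zero_le_one (hp_pos s).le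
  have hΓ_nonneg : ∀ t, 0 ≤ Γ t := fun t => by
    rw [hΓ]; exact mul_nonneg (hp_pos t).le (hG_nonneg t)
  -- lower bound on Γ
  have hΓ_lb : ∀ ε : ℝ, 0 < ε → ∀ t, t0 ≤ t → γ t ≤ ε → 1 / ε ≤ Γ t := by
    intro ε hε t ht hγε
    have hpt : ∀ s ∈ Set.Ioi t, (1 / p t) * Real.exp (-ε * (s - t)) ≤ 1 / p s := by
      intro s hs
      have hs' : t < s := hs
      have hFle : (∫ u in t0..s, γ u) - (∫ u in t0..t, γ u) ≤ ε * (s - t) := by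
        have hadd := intervalIntegral.integral_add_adjacent_intervals
          (hγ_ii t0 t le_rfl ht) (hγ_ii t s ht (le_trans ht hs'.le))
        have hmono : (∫ u in t..s, γ u) ≤ ∫ u in t..s, ε := by
          apply intervalIntegral.integral_mono_on hs'.le
            (hγ_ii t s ht (le_trans ht hs'.le)) intervalIntegrable_const
          intro u hu
          exact le_trans (hγ_anti ht (le_trans ht hu.1) hu.1) hγε
        rw [intervalIntegral.integral_const] at hmono
        have : (∫ u in t..s, γ u) ≤ ε * (s - t) := by
          rw [smul_eq_mul] at hmono; linarith [hmono]
        linarith [hadd, this]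
      have hple : p s ≤ p t * Real.exp (ε * (s - t)) := by
        rw [hp, hp, ← Real.exp_add]
        exact Real.exp_le_exp.2 (by linarith)
      have hinv := one_div_le_one_div_of_le (hp_pos s) hple
      calc (1 / p t) * Real.exp (-ε * (s - t))
          = 1 / (p t * Real.exp (ε * (s - t))) := by
            rw [neg_mul, Real.exp_neg]
            rw [one_div, one_div, mul_inv]
        _ ≤ 1 / p s := by
            apply one_div_le_one_div_of_le (hp_pos s)
            exact hple
    have hexp_eq : (fun s : ℝ => Real.exp (-ε * (s - t)))
        = fun s => Real.exp (ε * t) * Real.exp (-ε * s) := by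
      funext s; rw [← Real.exp_add]; ring_nf
    have hlow_intble : IntegrableOn (fun s : ℝ => (1 / p t) * Real.exp (-ε * (s - t)))
        (Set.Ioi t) := by
      apply Integrable.const_mul
      rw [hexp_eq]
      exact (exp_neg_integrableOn_Ioi t hε).const_mul _
    have hexp_int : (∫ s in Set.Ioi t, Real.exp (-ε * (s - t))) = 1 / ε := by
      have hderiv : ∀ x ∈ Set.Ici t,
          HasDerivAt (fun s => -(1 / ε) * Real.exp (-ε * (s - t)))
            (Real.exp (-ε * (x - t))) x := by
        intro x _
        have h1 : HasDerivAt (fun s : ℝ => -ε * (s - t)) (-ε) x := by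
          simpa using ((hasDerivAt_id x).sub_const t).const_mul (-ε)
        have h2 := h1.exp
        have h3 := h2.const_mul (-(1 / ε))
        convert h3 using 1
        · rfl
        · rfl
        rw [mul_comm (Real.exp _) (-ε), ← mul_assoc, neg_mul_neg, one_div, inv_mul_cancel₀ hε.ne', one_mul]
      have hint : IntegrableOn (fun s : ℝ => Real.exp (-ε * (s - t))) (Set.Ioi t) := by
        rw [hexp_eq]
        exact (exp_neg_integrableOn_Ioi t hε).const_mul _
      have htend : Tendsto (fun s => -(1 / ε) * Real.exp (-ε * (s - t))) atTop (𝓝 0) := by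
        have hbot : Tendsto (fun s : ℝ => -ε * (s - t)) atTop atBot := by
          exact (tendsto_const_mul_atBot_of_neg (by linarith : -ε < 0)).2
            (tendsto_atTop_add_const_right _ (-t) tendsto_id)
        have := (Real.tendsto_exp_atBot.comp hbot).const_mul (-(1 / ε))
        simpa using this
      have := MeasureTheory.integral_Ioi_of_hasDerivAt_of_tendsto' hderiv hint htend
      rw [this]
      simp
    have hmono := setIntegral_mono_on hlow_intble
      (hH1.mono_set (fun x hx => le_trans ht (le_of_lt hx))) measurableSet_Ioi hpt
    rw [MeasureTheory.integral_const_mul, hexp_int] at hmono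
    rw [hΓ]
    calc 1 / ε = p t * (1 / p t * (1 / ε)) := by
          field_simp
          rw [div_self (hp_pos t).ne']
      _ ≤ p t * ∫ s in Set.Ioi t, 1 / p s :=
          mul_le_mul_of_nonneg_left hmono (hp_pos t).le
  -- γ' is nonpositive
  have hγ'_nonpos : ∀ t, t0 < t → γ' t ≤ 0 := by
    intro t ht
    have h := (hγ_at t ht).hasDerivWithinAt (s := Set.Ici t)
    rw [hasDerivWithinAt_iff_tendsto_slope, Set.Ici_sdiff_left] at h
    refine le_of_tendsto h ?_
    filter_upwards [self_mem_nhdsWithin] with y hy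
    have hy' : t < y := hy
    have hle : γ y ≤ γ t := hγ_anti ht.le (le_trans ht.le hy'.le) hy'.le
    rw [slope_def_field]
    apply div_nonpos_of_nonpos_of_nonneg <;> linarith
  -- constants
  have hδ : 0 < b - 2 * (m - 1) := by linarith
  set M : ℝ := max (max (β * b / (b - 2 * (m - 1))) (β * b)) 0 + 1 with hMdef
  have hM1 : 1 ≤ M := by
    rw [hMdef]
    exact le_add_of_nonneg_left (le_max_right _ _)
  have hMpos : 0 < M := lt_of_lt_of_le one_pos hM1
  have hMb : β * b ≤ M := by
    rw [hMdef]
    exact le_add_of_le_of_nonneg (le_trans (le_max_right _ _) (le_max_left _ _)) zero_le_one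
  have hMd : β * b / (b - 2 * (m - 1)) ≤ M := by
    rw [hMdef]
    exact le_add_of_le_of_nonneg (le_trans (le_max_left _ _) (le_max_left _ _)) zero_le_one
  obtain ⟨T, hT⟩ := eventually_atTop.1
    (hγ_lim.eventually (gt_mem_nhds (lt_min (show (0:ℝ) < 1 / M by positivity)
      (show (0:ℝ) < 1 / (2 * β) by positivity))))
  refine ⟨max (max T t2) t0 + 1, by linarith [le_max_right (max T t2) t0], ?_⟩
  -- the derivative functions
  refine ⟨fun t => (((γ t * Γ t - 1) * (Γ t - β * b) + Γ t * (γ t * Γ t - 1)) * (1 - β * γ t)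
      - Γ t * (Γ t - β * b) * (-(β * γ' t))) / (1 - β * γ t) ^ 2,
    fun t => γ t * Γ t - 1, ?_, ?_⟩
  · -- derivatives
    intro t htge
    have hta : t0 < t := by
      have := le_max_right (max T t2) t0; linarith
    have hD : (1 - β * γ t) ≠ 0 := by
      have hTt : T ≤ t := by
        have h1 := le_max_left T t2
        have h2 := le_max_left (max T t2) t0
        linarith
      have hγt := hT t (by linarith)
      have hγ0 := hγ_nonneg t hta.le
      have h3 : γ t < 1 / (2 * β) := lt_of_lt_of_le hγt (min_le_right _ _)
      have h4 : β * (1 / (2 * β)) = 1 / 2 := by field_simp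
      nlinarith [mul_lt_mul_of_pos_left h3 hβ]
    constructor
    · have hN : HasDerivAt (fun u => Γ u * (Γ u - β * b))
          ((γ t * Γ t - 1) * (Γ t - β * b) + Γ t * (γ t * Γ t - 1)) t :=
        (hΓ_deriv t hta).mul ((hΓ_deriv t hta).sub_const (β * b))
      have hDd : HasDerivAt (fun u => 1 - β * γ u) (-(β * γ' t)) t :=
        ((hγ_at t hta).const_mul β).const_sub 1
      have hdiv := hN.div hDd hD
      have haeq : a = fun u => Γ u * (Γ u - β * b) / (1 - β * γ u) := funext ha
      rw [haeq]
      exact hdiv.hasDerivWithinAt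
    · have hceq : c = Γ := funext hc
      rw [hceq]
      exact (hΓ_deriv t hta).hasDerivWithinAt
  · -- the relations
    intro t htge
    have hta : t0 < t := by
      have := le_max_right (max T t2) t0; linarith
    have hTt : T ≤ t := by
      have h1 := le_max_left T t2
      have h2 := le_max_left (max T t2) t0
      linarith
    have ht2t : t2 ≤ t := by
      have h1 := le_max_right T t2
      have h2 := le_max_left (max T t2) t0
      linarith
    have hγt := hT t (by linarith)
    have hγ0 := hγ_nonneg t hta.le
    have hγ'0 := hγ'_nonpos t hta
    have hΓ0 := hΓ_nonneg t
    have hxm : γ t * Γ t ≤ m := hH30 t ht2t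
    have hD : 0 < 1 - β * γ t := by
      have h3 : γ t < 1 / (2 * β) := lt_of_lt_of_le hγt (min_le_right _ _)
      have h4 : β * (1 / (2 * β)) = 1 / 2 := by field_simp
      nlinarith [mul_lt_mul_of_pos_left h3 hβ]
    have hΓM : M ≤ Γ t := by
      have h5 : γ t ≤ 1 / M := le_trans hγt.le (min_le_left _ _)
      have := hΓ_lb (1 / M) (by positivity) t hta.le h5
      rwa [one_div_one_div] at this
    have hΓβb : β * b ≤ Γ t := le_trans hMb hΓM
    have hδΓ : β * b ≤ (b - 2 * (m - 1)) * Γ t := by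
      have := (div_le_iff₀ hδ).1 (le_trans hMd hΓM)
      linarith [this]
    refine ⟨hD, ?_, ?_, ?_, by norm_num, ?_, ?_⟩
    · -- relation (1)
      rw [hc]
      have key : (γ t * Γ t - 1) * (Γ t - β * b) + Γ t * (γ t * Γ t - 1)
          ≤ b * Γ t * (1 - β * γ t) := by
        nlinarith [mul_le_mul_of_nonneg_left hxm hΓ0, hδΓ]
      have h2nd : Γ t * (Γ t - β * b) * (β * γ' t) ≤ 0 :=
        mul_nonpos_of_nonneg_of_nonpos (mul_nonneg hΓ0 (by linarith))
          (mul_nonpos_of_nonneg_of_nonpos hβ.le hγ'0)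
      have hnum : ((γ t * Γ t - 1) * (Γ t - β * b) + Γ t * (γ t * Γ t - 1)) * (1 - β * γ t)
          - Γ t * (Γ t - β * b) * (-(β * γ' t)) ≤ b * Γ t * (1 - β * γ t) ^ 2 := by
        nlinarith [mul_le_mul_of_nonneg_right key hD.le, h2nd]
      have := (div_le_iff₀ (by positivity : (0:ℝ) < (1 - β * γ t) ^ 2)).2 hnum
      linarith [this]
    · -- relation (2)
      have hA : 0 ≤ a t := by
        rw [ha]
        exact div_nonneg (mul_nonneg hΓ0 (by linarith)) hD.le
      nlinarith [mul_nonneg hA hβ.le]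
    · -- relation (3)
      have hDne : (1 - β * γ t) ≠ 0 := hD.ne'
      rw [ha, hc]
      field_simp
      ring
    · -- relation (5)
      rw [hc]; ring
    · -- relation (6)
      rw [hc]
      beta_reduce
      nlinarith [mul_nonneg hΓ0 (by linarith : (0:ℝ) ≤ 1 - b)]
end

section
/- Let t0 > 0, r ∈ (0,1), α ≥ 1 − r, and define γ(t) = α/t^r on [t0,∞) and p(t) = exp(∫_{t0}^t γ(s) ds) = exp((α/(1−r))(t^{1−r} − t0^{1−r})). With c = e^{−(α/(1−r))·t0^{1−r}}·∫_0^{t0} e^{(α/(1−r))·s^{1−r}} ds, define λ_c(t) = p(t)/(c + ∫_{t0}^t p(s) ds). Then γ(t) ≤ λ_c(t) for every t ≥ t0, so hypothesis (Ha) holds. -/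
/-- For `γ(t) = α/t^r` with `r ∈ (0,1)`, `α ≥ 1−r`, `p(t) = exp(∫_{t0}^t γ)
 = exp((α/(1−r))(t^{1−r} − t0^{1−r}))`, and
`c = e^{−(α/(1−r))t0^{1−r}}·∫_0^{t0} e^{(α/(1−r))s^{1−r}} ds`, the function
`λ_c(t) = p(t)/(c + ∫_{t0}^t p)` dominates `γ`: `γ(t) ≤ λ_c(t)` for every `t ≥ t0`,
so hypothesis (Ha) holds. -/
theorem stmt15 (t0 r α : ℝ) (ht0 : 0 < t0) (hr : r ∈ Set.Ioo (0:ℝ) 1) (hα : 1 - r ≤ α)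
    (γ p lam : ℝ → ℝ) (c : ℝ)
    (hγ : ∀ t, γ t = α / t ^ r)
    (hp : ∀ t, p t = Real.exp (∫ s in t0..t, γ s))
    (hc : c = Real.exp (-(α / (1 - r)) * t0 ^ (1 - r)) *
      ∫ s in (0:ℝ)..t0, Real.exp ((α / (1 - r)) * s ^ (1 - r)))
    (hlam : ∀ t, lam t = p t / (c + ∫ s in t0..t, p s)) :
    ∀ t ≥ t0, γ t ≤ lam t := by
  obtain ⟨hr0, hr1⟩ := hr
  have h1r : (0:ℝ) < 1 - r := by linarith
  have hα0 : 0 < α := lt_of_lt_of_le h1r hα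
  set K := α / (1 - r) with hK
  have hK0 : 0 < K := div_pos hα0 h1r
  have hKr : K * (1 - r) = α := div_mul_cancel₀ α h1r.ne'
  set h : ℝ → ℝ := fun s => Real.exp (K * s ^ (1 - r)) with hh
  have hcont : Continuous h := by
    apply Real.continuous_exp.comp
    exact continuous_const.mul
      (continuous_iff_continuousAt.mpr fun x =>
        Real.continuousAt_rpow_const x (1 - r) (Or.inr h1r.le))
  set E := Real.exp (-(K * t0 ^ (1 - r))) with hE
  have hE0 : 0 < E := Real.exp_pos _
  -- formula for p on positive arguments
  have hpt : ∀ u, 0 < u → p u = E * h u := by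
    intro u hu
    have hint : (∫ s in t0..u, γ s) = K * u ^ (1 - r) - K * t0 ^ (1 - r) := by
      have hco : Set.EqOn γ (fun s => α * s ^ (-r)) (Set.uIcc t0 u) := by
        intro s hs
        have hs0 : 0 < s := lt_of_lt_of_le (lt_min ht0 hu) hs.1
        show γ s = α * s ^ (-r)
        rw [hγ, Real.rpow_neg hs0.le, div_eq_mul_inv]
      rw [intervalIntegral.integral_congr hco, intervalIntegral.integral_const_mul,
        integral_rpow (Or.inl (by linarith)),
        show (-r + 1) = 1 - r by ring]
      rw [hK]
      field_simp
    rw [hp, hint, hE, hh, ← Real.exp_add]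
    ring_nf
  intro t ht
  have htpos : 0 < t := lt_of_lt_of_le ht0 ht
  -- c + ∫_{t0}^t p = E * ∫_0^t h
  have hhint : ∀ a b : ℝ, IntervalIntegrable h MeasureTheory.volume a b :=
    fun a b => hcont.intervalIntegrable a b
  have hcE : c = E * ∫ s in (0:ℝ)..t0, h s := by
    rw [hc, hE, hh]
    norm_num
  have hpint : (∫ s in t0..t, p s) = E * ∫ s in t0..t, h s := by
    rw [← intervalIntegral.integral_const_mul]
    apply intervalIntegral.integral_congr
    intro s hs
    exact hpt s (lt_of_lt_of_le (lt_min ht0 htpos) hs.1)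
  have hsplit : (∫ s in (0:ℝ)..t0, h s) + (∫ s in t0..t, h s) = ∫ s in (0:ℝ)..t, h s :=
    intervalIntegral.integral_add_adjacent_intervals (hhint 0 t0) (hhint t0 t)
  have hden : c + (∫ s in t0..t, p s) = E * ∫ s in (0:ℝ)..t, h s := by
    rw [hcE, hpint, ← mul_add, hsplit]
  set I := ∫ s in (0:ℝ)..t, h s with hI
  -- positivity of I
  have hIpos : 0 < I := by
    have h1 : (∫ s in (0:ℝ)..t, (1:ℝ)) ≤ I := by
      apply intervalIntegral.integral_mono_on htpos.le (intervalIntegrable_const) (hhint 0 t)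
      intro s hs
      have : 0 ≤ K * s ^ (1 - r) :=
        mul_nonneg hK0.le (Real.rpow_nonneg hs.1 _)
      simpa [hh] using Real.one_le_exp this
    simpa using lt_of_lt_of_le (by simpa using htpos) h1
  -- key inequality via FTC
  have htr : 0 < t ^ r := Real.rpow_pos_of_pos htpos r
  have gint : IntervalIntegrable (fun s => α * s ^ (-r) * h s) MeasureTheory.volume 0 t := by
    apply IntervalIntegrable.mul_continuousOn
    · exact (intervalIntegral.intervalIntegrable_rpow' (by linarith)).const_mul α
    · exact hcont.continuousOn
  have hftc : (∫ s in (0:ℝ)..t, α * s ^ (-r) * h s) = h t - 1 := by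
    have hder : ∀ s ∈ Set.Ioo (0:ℝ) t, HasDerivAt h (α * s ^ (-r) * h s) s := by
      intro s hs
      have h1 : HasDerivAt (fun x : ℝ => x ^ (1 - r)) ((1 - r) * s ^ (1 - r - 1)) s :=
        Real.hasDerivAt_rpow_const (Or.inl hs.1.ne')
      have h2 : HasDerivAt (fun x : ℝ => K * x ^ (1 - r)) (K * ((1 - r) * s ^ (1 - r - 1))) s :=
        h1.const_mul K
      have h3 := h2.exp
      convert h3 using 1
      rw [show (1 - r - 1) = -r by ring, hh, ← hKr]
      ring
    have := intervalIntegral.integral_eq_sub_of_hasDerivAt_of_le htpos.le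
      hcont.continuousOn (fun s hs => hder s hs) gint
    rw [this, hh]
    simp [Real.zero_rpow h1r.ne']
  have hkey : α / t ^ r * I ≤ h t := by
    have hmono : (∫ s in (0:ℝ)..t, α / t ^ r * h s) ≤ ∫ s in (0:ℝ)..t, α * s ^ (-r) * h s := by
      rw [intervalIntegral.integral_of_le htpos.le, intervalIntegral.integral_of_le htpos.le]
      apply MeasureTheory.setIntegral_mono_on
      · exact ((hhint 0 t).const_mul _).1
      · exact gint.1
      · exact measurableSet_Ioc
      · intro s hs
        have hs0 : 0 < s := hs.1
        have hsr : s ^ r ≤ t ^ r := Real.rpow_le_rpow hs0.le hs.2 hr0.le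
        have hsr0 : 0 < s ^ r := Real.rpow_pos_of_pos hs0 r
        have : α / t ^ r ≤ α * s ^ (-r) := by
          rw [Real.rpow_neg hs0.le, ← div_eq_mul_inv]
          exact div_le_div_of_nonneg_left hα0.le hsr0 hsr
        exact mul_le_mul_of_nonneg_right this (Real.exp_nonneg _)
    rw [intervalIntegral.integral_const_mul] at hmono
    calc α / t ^ r * I ≤ h t - 1 := by rw [← hftc]; exact hmono
    _ ≤ h t := by linarith
  -- conclude
  rw [hγ, hlam, hden, hpt t htpos, mul_div_mul_left _ _ hE0.ne', le_div_iff₀ hIpos]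
  exact hkey
end

section
/- Let t0 ≥ 0, μ > 0, K > 0, Y0 ≥ 0, and let σ : [t0,∞) → [0,∞) be non-increasing. Define Y(t) = Y0·e^{−(√μ/2)(t−t0)} + K·∫_{t0}^t e^{−(√μ/2)(t−s)}·σ(s)² ds (the solution of the Cauchy problem Y' = −(√μ/2)Y + K·σ(t)², Y(t0) = Y0). Then for every t ≥ t0: Y(t) ≤ Y0·e^{−(√μ/2)(t−t0)} + (2K/√μ)·σ((t0+t)/2)² + (2K/√μ)·σ(t0)²·e^{−(√μ/4)(t−t0)}. -/
open Real intervalIntegral MeasureTheory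

lemma int_exp_aux (c t a b : ℝ) (hc : c ≠ 0) :
    ∫ s in a..b, Real.exp (-c * (t - s)) =
      (Real.exp (-c * (t - b)) - Real.exp (-c * (t - a))) / c := by
  have hF : ∀ s : ℝ, HasDerivAt (fun s => Real.exp (-c * (t - s)) / c)
      (Real.exp (-c * (t - s))) s := by
    intro s
    have h1 : HasDerivAt (fun s : ℝ => -c * (t - s)) c s := by
      simpa using ((hasDerivAt_id s).const_sub t).const_mul (-c)
    have h2 := h1.exp.div_const c
    rwa [mul_div_cancel_right₀ _ hc] at h2
  rw [intervalIntegral.integral_eq_sub_of_hasDerivAt (fun s _ => hF s)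
    (Continuous.intervalIntegrable (by continuity) a b)]
  ring

/-- Let `σ : [t0,∞) → [0,∞)` be non-increasing and let
`Y(t) = Y0·e^{−(√μ/2)(t−t0)} + K·∫_{t0}^t e^{−(√μ/2)(t−s)} σ(s)² ds` be the solution of
`Y' = −(√μ/2)Y + Kσ(t)²`, `Y(t0) = Y0`. Then for all `t ≥ t0`,
`Y(t) ≤ Y0·e^{−(√μ/2)(t−t0)} + (2K/√μ)·σ((t0+t)/2)² + (2K/√μ)·σ(t0)²·e^{−(√μ/4)(t−t0)}`. -/
theorem stmt17 (t0 μ K Y0 : ℝ) (ht0 : 0 ≤ t0) (hμ : 0 < μ) (hK : 0 < K) (hY0 : 0 ≤ Y0)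
    (σ : ℝ → ℝ) (hσ_nonneg : ∀ t ≥ t0, 0 ≤ σ t) (hσ_anti : AntitoneOn σ (Set.Ici t0))
    (Y : ℝ → ℝ)
    (hY : ∀ t, Y t = Y0 * Real.exp (-(Real.sqrt μ / 2) * (t - t0)) +
      K * ∫ s in t0..t, Real.exp (-(Real.sqrt μ / 2) * (t - s)) * (σ s) ^ 2) :
    ∀ t ≥ t0, Y t ≤ Y0 * Real.exp (-(Real.sqrt μ / 2) * (t - t0)) +
      (2 * K / Real.sqrt μ) * (σ ((t0 + t) / 2)) ^ 2 +
      (2 * K / Real.sqrt μ) * (σ t0) ^ 2 * Real.exp (-(Real.sqrt μ / 4) * (t - t0)) := by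
  intro t ht
  have hsq : 0 < Real.sqrt μ := Real.sqrt_pos.mpr hμ
  set c : ℝ := Real.sqrt μ / 2 with hc_def
  have hc : 0 < c := by positivity
  set m : ℝ := (t0 + t) / 2 with hm_def
  have hm1 : t0 ≤ m := by simp only [hm_def]; linarith
  have hm2 : m ≤ t := by simp only [hm_def]; linarith
  -- integrability
  have hint : ∀ a b : ℝ, t0 ≤ a → a ≤ b →
      IntervalIntegrable (fun s => Real.exp (-c * (t - s)) * σ s ^ 2) volume a b := by
    intro a b ha hab
    have hsub : Set.uIcc a b ⊆ Set.Ici t0 := by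
      rw [Set.uIcc_of_le hab]
      exact fun x hx => le_trans ha hx.1
    have hσ2 : AntitoneOn (fun s => σ s ^ 2) (Set.uIcc a b) := by
      intro x hx y hy hxy
      have hx' := hsub hx; have hy' := hsub hy
      exact pow_le_pow_left₀ (hσ_nonneg y hy') (hσ_anti hx' hy' hxy) 2
    exact (hσ2.intervalIntegrable).continuousOn_mul (by fun_prop)
  have hexp_int : ∀ a b C : ℝ, IntervalIntegrable
      (fun s => Real.exp (-c * (t - s)) * C) volume a b :=
    fun a b C => Continuous.intervalIntegrable (by continuity) a b
  -- split the integral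
  have hsplit : (∫ s in t0..t, Real.exp (-c * (t - s)) * σ s ^ 2) =
      (∫ s in t0..m, Real.exp (-c * (t - s)) * σ s ^ 2) +
      (∫ s in m..t, Real.exp (-c * (t - s)) * σ s ^ 2) :=
    (intervalIntegral.integral_add_adjacent_intervals (hint t0 m le_rfl hm1)
      (hint m t hm1 hm2)).symm
  -- bound first piece
  have h1 : (∫ s in t0..m, Real.exp (-c * (t - s)) * σ s ^ 2) ≤
      (∫ s in t0..m, Real.exp (-c * (t - s)) * σ t0 ^ 2) := by
    apply intervalIntegral.integral_mono_on hm1 (hint t0 m le_rfl hm1) (hexp_int t0 m _)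
    intro x hx
    have hx0 : t0 ≤ x := hx.1
    have : σ x ^ 2 ≤ σ t0 ^ 2 :=
      pow_le_pow_left₀ (hσ_nonneg x hx0) (hσ_anti (by exact le_refl t0) hx0 hx0) 2
    exact mul_le_mul_of_nonneg_left this (Real.exp_nonneg _)
  have h2 : (∫ s in m..t, Real.exp (-c * (t - s)) * σ s ^ 2) ≤
      (∫ s in m..t, Real.exp (-c * (t - s)) * σ m ^ 2) := by
    apply intervalIntegral.integral_mono_on hm2 (hint m t hm1 hm2) (hexp_int m t _)
    intro x hx
    have hx0 : t0 ≤ x := le_trans hm1 hx.1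
    have : σ x ^ 2 ≤ σ m ^ 2 :=
      pow_le_pow_left₀ (hσ_nonneg x hx0) (hσ_anti hm1 hx0 hx.1) 2
    exact mul_le_mul_of_nonneg_left this (Real.exp_nonneg _)
  -- compute the exponential integrals
  have e1 : (∫ s in t0..m, Real.exp (-c * (t - s)) * σ t0 ^ 2) =
      (Real.exp (-c * (t - m)) - Real.exp (-c * (t - t0))) / c * σ t0 ^ 2 := by
    rw [intervalIntegral.integral_mul_const, int_exp_aux c t t0 m hc.ne']
  have e2 : (∫ s in m..t, Real.exp (-c * (t - s)) * σ m ^ 2) =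
      (Real.exp (-c * (t - t)) - Real.exp (-c * (t - m))) / c * σ m ^ 2 := by
    rw [intervalIntegral.integral_mul_const, int_exp_aux c t m t hc.ne']
  -- exponent arithmetic
  have hkey : -c * (t - m) = -(Real.sqrt μ / 4) * (t - t0) := by
    simp only [hc_def, hm_def]; ring
  -- assemble
  rw [hY t, hsplit]
  have hb1 : (∫ s in t0..m, Real.exp (-c * (t - s)) * σ s ^ 2) ≤
      (1 / c) * Real.exp (-(Real.sqrt μ / 4) * (t - t0)) * σ t0 ^ 2 := by
    refine h1.trans ?_
    rw [e1, ← hkey]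
    have : (Real.exp (-c * (t - m)) - Real.exp (-c * (t - t0))) / c ≤
        Real.exp (-c * (t - m)) / c := by
      exact (div_le_div_iff_of_pos_right hc).mpr (by linarith [Real.exp_nonneg (-c * (t - t0))])
    have hσ0 : 0 ≤ σ t0 ^ 2 := sq_nonneg _
    calc (Real.exp (-c * (t - m)) - Real.exp (-c * (t - t0))) / c * σ t0 ^ 2
        ≤ Real.exp (-c * (t - m)) / c * σ t0 ^ 2 := mul_le_mul_of_nonneg_right this hσ0
      _ = (1 / c) * Real.exp (-c * (t - m)) * σ t0 ^ 2 := by ring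
  have hb2 : (∫ s in m..t, Real.exp (-c * (t - s)) * σ s ^ 2) ≤ (1 / c) * σ m ^ 2 := by
    refine h2.trans ?_
    rw [e2]
    have : (Real.exp (-c * (t - t)) - Real.exp (-c * (t - m))) / c ≤ 1 / c := by
      refine (div_le_div_iff_of_pos_right hc).mpr ?_
      have := Real.exp_nonneg (-c * (t - m))
      have h3 : Real.exp (-c * (t - t)) = 1 := by simp
      linarith
    exact (mul_le_mul_of_nonneg_right this (sq_nonneg _))
  have hcK : K * (1 / c) = 2 * K / Real.sqrt μ := by
    rw [hc_def]; field_simp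
  have := add_le_add hb1 hb2
  calc Y0 * Real.exp (-(Real.sqrt μ / 2) * (t - t0)) +
        K * ((∫ s in t0..m, Real.exp (-c * (t - s)) * σ s ^ 2) +
          (∫ s in m..t, Real.exp (-c * (t - s)) * σ s ^ 2))
      ≤ Y0 * Real.exp (-(Real.sqrt μ / 2) * (t - t0)) +
        K * ((1 / c) * Real.exp (-(Real.sqrt μ / 4) * (t - t0)) * σ t0 ^ 2 +
          (1 / c) * σ m ^ 2) := by
        have := add_le_add hb1 hb2
        nlinarith [this, hK.le]
    _ = Y0 * Real.exp (-(Real.sqrt μ / 2) * (t - t0)) +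
        (2 * K / Real.sqrt μ) * σ m ^ 2 +
        (2 * K / Real.sqrt μ) * σ t0 ^ 2 * Real.exp (-(Real.sqrt μ / 4) * (t - t0)) := by
        rw [← hcK]; ring
end

section
/- Let t0 > 0, let Γ : [t0,∞) → (0,∞) be continuous with ∫_{t0}^∞ ds/Γ(s) = +∞, let ℓ ∈ ℝ, and let h : [t0,∞) → ℝ be continuously differentiable such that lim_{t→∞} ( h(t) + Γ(t)·h'(t) ) = ℓ. Then lim_{t→∞} h(t) = ℓ. -/
open MeasureTheory Filter

/-- Deterministic core of the trajectory-convergence argument: if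
`Γ : [t0,∞) → (0,∞)` is continuous with `∫_{t0}^∞ 1/Γ = +∞`, `h` is continuously
differentiable on `[t0,∞)` and `h(t) + Γ(t)·h'(t) → ℓ` as `t → ∞`, then `h(t) → ℓ`. -/
theorem stmt18 (t0 l : ℝ) (ht0 : 0 < t0) (Γ : ℝ → ℝ)
    (hΓ_cont : ContinuousOn Γ (Set.Ici t0))
    (hΓ_pos : ∀ t ≥ t0, 0 < Γ t)
    (hΓ_int : ∫⁻ s in Set.Ici t0, ENNReal.ofReal (1 / Γ s) = ⊤)
    (h h' : ℝ → ℝ)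
    (hh_deriv : ∀ t ≥ t0, HasDerivAt h (h' t) t)
    (hh'_cont : ContinuousOn h' (Set.Ici t0))
    (hlim : Tendsto (fun t => h t + Γ t * h' t) atTop (nhds l)) :
    Tendsto h atTop (nhds l) := by
  set φ : ℝ → ℝ := fun s => 1 / Γ s with hφ_def
  have hφ_cont : ContinuousOn φ (Set.Ici t0) :=
    continuousOn_const.div hΓ_cont (fun t ht => (hΓ_pos t ht).ne')
  have hφ_pos : ∀ t ≥ t0, 0 < φ t := fun t ht => by
    simp only [φ, one_div, inv_pos]; exact hΓ_pos t ht
  have hsub : ∀ a b : ℝ, t0 ≤ a → t0 ≤ b → Set.uIcc a b ⊆ Set.Ici t0 := by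
    intro a b ha hb x hx
    exact le_trans (le_min ha hb) hx.1
  have hφ_int : ∀ a b, t0 ≤ a → t0 ≤ b → IntervalIntegrable φ volume a b := by
    intro a b ha hb
    exact (hφ_cont.mono (hsub a b ha hb)).intervalIntegrable
  set G : ℝ → ℝ := fun t => ∫ s in t0..t, φ s with hG_def
  -- G is unbounded
  have hG_unbdd : ∀ M : ℝ, ∃ t ≥ t0, M ≤ G t := by
    intro M
    by_contra hcon
    push_neg at hcon
    have hIoc : ∀ n : ℕ, IntegrableOn φ (Set.Ioc t0 (t0 + n)) volume := by
      intro n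
      have := hφ_int t0 (t0 + n) le_rfl (le_add_of_nonneg_right n.cast_nonneg)
      rw [intervalIntegrable_iff_integrableOn_Ioc_of_le
        (le_add_of_nonneg_right n.cast_nonneg)] at this
      exact this
    have htends : Tendsto (fun n : ℕ => t0 + (n : ℝ)) atTop atTop :=
      tendsto_atTop_add_const_left _ _ tendsto_natCast_atTop_atTop
    have hbound : ∀ n : ℕ, (∫ x in t0..(t0 + (n : ℝ)), ‖φ x‖) ≤ M := by
      intro n
      have heq : (∫ x in t0..(t0 + (n : ℝ)), ‖φ x‖) = G (t0 + n) := by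
        apply intervalIntegral.integral_congr
        intro x hx
        have hx' : t0 ≤ x := hsub _ _ le_rfl (le_add_of_nonneg_right n.cast_nonneg) hx
        exact abs_of_pos (hφ_pos x hx')
      rw [heq]
      exact (hcon _ (le_add_of_nonneg_right n.cast_nonneg)).le
    have hInt : IntegrableOn φ (Set.Ioi t0) volume :=
      integrableOn_Ioi_of_intervalIntegral_norm_bounded M t0 hIoc htends
        (Eventually.of_forall hbound)
    have hlt : (∫⁻ s in Set.Ioi t0, ENNReal.ofReal (φ s)) < ⊤ := hInt.lintegral_lt_top
    have heqm : (∫⁻ s in Set.Ici t0, ENNReal.ofReal (1 / Γ s))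
        = ∫⁻ s in Set.Ioi t0, ENNReal.ofReal (1 / Γ s) :=
      setLIntegral_congr (Ioi_ae_eq_Ici (μ := volume) (a := t0)).symm
    have hlt2 : (∫⁻ s in Set.Ici t0, ENNReal.ofReal (1 / Γ s)) < ⊤ := by
      rw [heqm]; exact hlt
    rw [hΓ_int] at hlt2
    exact (lt_irrefl _ hlt2)
  -- G is monotone above t0 and tends to infinity
  have hG_add : ∀ a b : ℝ, t0 ≤ a → a ≤ b → G b = G a + ∫ s in a..b, φ s := by
    intro a b ha hab
    have h2 := intervalIntegral.integral_add_adjacent_intervals (hφ_int t0 a le_rfl ha)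
      (hφ_int a b ha (ha.trans hab))
    show (∫ s in t0..b, φ s) = (∫ s in t0..a, φ s) + ∫ s in a..b, φ s
    linarith
  have hG_mono : ∀ a b : ℝ, t0 ≤ a → a ≤ b → G a ≤ G b := by
    intro a b ha hab
    rw [hG_add a b ha hab]
    have : 0 ≤ ∫ s in a..b, φ s := by
      apply intervalIntegral.integral_nonneg hab
      intro u hu
      exact (hφ_pos u (ha.trans hu.1)).le
    linarith
  have hG_top : Tendsto G atTop atTop := by
    rw [tendsto_atTop]
    intro M
    obtain ⟨t1, ht1, hMt1⟩ := hG_unbdd M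
    filter_upwards [eventually_ge_atTop t1] with t ht
    exact hMt1.trans (hG_mono t1 t ht1 ht)
  set g : ℝ → ℝ := fun t => Real.exp (G t) with hg_def
  have hg_pos : ∀ t, 0 < g t := fun t => Real.exp_pos _
  have hg_top : Tendsto g atTop atTop := Real.tendsto_exp_atTop.comp hG_top
  -- derivatives
  have hG_deriv : ∀ t > t0, HasDerivAt G (φ t) t := by
    intro t ht
    apply intervalIntegral.integral_hasDerivAt_right (hφ_int t0 t le_rfl ht.le)
    · exact (hφ_cont.mono (Set.Ioi_subset_Ici le_rfl)).stronglyMeasurableAtFilter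
        isOpen_Ioi t ht
    · exact (hφ_cont.continuousAt (Ici_mem_nhds ht))
  have hg_deriv : ∀ t > t0, HasDerivAt g (g t * φ t) t := by
    intro t ht
    simpa [hg_def, mul_comm] using (hG_deriv t ht).exp
  set F : ℝ → ℝ := fun t => g t * (h t - l) with hF_def
  have hF_deriv : ∀ t > t0, HasDerivAt F (g t * φ t * (h t + Γ t * h' t - l)) t := by
    intro t ht
    have h1 := (hg_deriv t ht).mul ((hh_deriv t ht.le).sub_const l)
    refine h1.congr_deriv ?_
    have hΓ : Γ t ≠ 0 := (hΓ_pos t ht.le).ne'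
    have hφΓ : φ t * Γ t = 1 := one_div_mul_cancel hΓ
    linear_combination -(g t * h' t) * hφΓ
  -- key estimate
  have key : ∀ ε : ℝ, 0 < ε → ∀ᶠ t in atTop, |h t - l| ≤ 2 * ε := by
    intro ε hε
    have hev : ∀ᶠ t in atTop, |h t + Γ t * h' t - l| ≤ ε := by
      have := Metric.tendsto_nhds.1 hlim ε hε
      filter_upwards [this] with t ht
      rw [Real.dist_eq] at ht
      exact ht.le
    obtain ⟨T, hT⟩ := (hev.and (eventually_gt_atTop t0)).exists_forall_of_atTop
    have hT0 : t0 < T := (hT T le_rfl).2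
    have hcont_int : ∀ t : ℝ, T ≤ t →
        ContinuousOn (fun s => g s * φ s * (h s + Γ s * h' s - l)) (Set.uIcc T t) := by
      intro t htt s hs
      have hs0 : t0 < s := lt_of_lt_of_le hT0 (le_trans (le_min le_rfl htt) hs.1)
      have hgc : ContinuousAt g s := (hg_deriv s hs0).continuousAt
      have hφc : ContinuousAt φ s := hφ_cont.continuousAt (Ici_mem_nhds hs0)
      have hhc : ContinuousAt h s := (hh_deriv s hs0.le).continuousAt
      have hΓc : ContinuousAt Γ s := hΓ_cont.continuousAt (Ici_mem_nhds hs0)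
      have hh'c : ContinuousAt h' s := hh'_cont.continuousAt (Ici_mem_nhds hs0)
      exact ((hgc.mul hφc).mul
        ((hhc.add (hΓc.mul hh'c)).sub continuousAt_const)).continuousWithinAt
    have hcont_gφ : ∀ t : ℝ, T ≤ t →
        ContinuousOn (fun s => g s * φ s) (Set.uIcc T t) := by
      intro t htt s hs
      have hs0 : t0 < s := lt_of_lt_of_le hT0 (le_trans (le_min le_rfl htt) hs.1)
      exact ((hg_deriv s hs0).continuousAt.mul
        (hφ_cont.continuousAt (Ici_mem_nhds hs0))).continuousWithinAt
    have main : ∀ t : ℝ, T ≤ t → |F t - F T| ≤ ε * (g t - g T) := by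
      intro t htt
      have hftc : F t - F T = ∫ s in T..t, g s * φ s * (h s + Γ s * h' s - l) := by
        symm
        apply intervalIntegral.integral_eq_sub_of_hasDerivAt
        · intro s hs
          have hs0 : t0 < s := lt_of_lt_of_le hT0 (le_trans (le_min le_rfl htt) hs.1)
          exact hF_deriv s hs0
        · exact (hcont_int t htt).intervalIntegrable
      have hgftc : g t - g T = ∫ s in T..t, g s * φ s := by
        symm
        apply intervalIntegral.integral_eq_sub_of_hasDerivAt
        · intro s hs
          have hs0 : t0 < s := lt_of_lt_of_le hT0 (le_trans (le_min le_rfl htt) hs.1)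
          exact hg_deriv s hs0
        · exact (hcont_gφ t htt).intervalIntegrable
      rw [hftc, hgftc, ← intervalIntegral.integral_const_mul]
      calc |∫ s in T..t, g s * φ s * (h s + Γ s * h' s - l)|
          ≤ ∫ s in T..t, |g s * φ s * (h s + Γ s * h' s - l)| :=
            intervalIntegral.abs_integral_le_integral_abs htt
        _ ≤ ∫ s in T..t, ε * (g s * φ s) := by
            apply intervalIntegral.integral_mono_on htt
            · exact ((hcont_int t htt).abs).intervalIntegrable
            · exact (continuousOn_const.mul (hcont_gφ t htt)).intervalIntegrable
            · intro s hs
              have hsT : T ≤ s := hs.1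
              have hs0 : t0 ≤ s := (hT0.trans_le hsT).le
              have hgφ : 0 ≤ g s * φ s := (mul_pos (hg_pos s) (hφ_pos s hs0)).le
              rw [abs_mul, abs_of_nonneg hgφ, mul_comm ε]
              exact mul_le_mul_of_nonneg_left ((hT s hsT).1) hgφ
    -- conclude
    filter_upwards [eventually_ge_atTop T, hg_top.eventually_ge_atTop ((|F T| + 1) / ε)]
      with t h1 h2
    have hεg : |F T| + 1 ≤ ε * g t := by
      rw [div_le_iff₀ hε] at h2
      linarith
    have hFt : |F t| ≤ |F T| + ε * (g t - g T) := by
      have := main t h1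
      have h3 : |F t| - |F T| ≤ |F t - F T| := abs_sub_abs_le_abs_sub _ _
      linarith
    have hFt2 : |F t| ≤ 2 * ε * g t := by
      have hgT : 0 < g T := hg_pos T
      have hFT : 0 ≤ |F T| := abs_nonneg _
      nlinarith
    have habs : |F t| = g t * |h t - l| := by
      rw [hF_def]
      rw [abs_mul, abs_of_pos (hg_pos t)]
    rw [habs] at hFt2
    have := hg_pos t
    nlinarith
  rw [Metric.tendsto_nhds]
  intro ε hε
  filter_upwards [key (ε / 3) (by positivity)] with t ht
  rw [Real.dist_eq]
  linarith
end
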